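/- Let s ≥ 2, a ≥ 2, q = a·C(s,2) - 1, and n ≥ s. If G is a multigraph on [n] in which every s-element vertex set spans total edge multiplicity at most q, then the sum of all edge multiplicities of G is at most (a-1)·C(n,2) + t_{s-1}(n), where t_{s-1}(n) is the number of edges of the Turán graph T_{s-1}(n). Moreover this bound is attained. -/

import Mathlib

open Finset

def pairs (n : ℕ) (X : Finset (Fin n)) : Finset (Fin n × Fin n) :=
  (X ×ˢ X).filter (fun p => p.1 < p.2)

def mgS (n : ℕ) (w : Fin n → Fin n → ℕ) (X : Finset (Fin n)) : ℕ :=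
  ∑ p ∈ pairs n X, w p.1 p.2

def mgP (n : ℕ) (w : Fin n → Fin n → ℕ) (X : Finset (Fin n)) : ℕ :=
  ∏ p ∈ pairs n X, w p.1 p.2

def IsNSQ (n s q : ℕ) (w : Fin n → Fin n → ℕ) : Prop :=
  ∀ X : Finset (Fin n), X.card = s → mgS n w X ≤ q

noncomputable def tEdges (r n : ℕ) : ℕ := Nat.card (SimpleGraph.turanGraph n r).edgeSet

/-!
Induction on the vertex set `V`, removing one vertex at a time, down to the `s`-sets themselves.
Let `Y ⊆ V` be an `(s-1)`-set of maximum weight and `d(u) = ∑_{y ∈ Y} w(u,y)` for `u ∉ Y`.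
Since `Y ∪ {u}` is an `s`-set, `w(Y) + d(u) ≤ q`; since exchanging `u` for a vertex of `Y` does not
increase the weight, `(s-2) d(u) ≤ 2 w(Y)`. If `2 w(Y) ≥ a(s-1)(s-2)` the first bound, otherwise
the second one, shows that the degrees in `V` of the vertices of `Y` add up to less than
`(s-1)(t+1)`, where `t = (a-1)m + (m - ⌊m/(s-1)⌋)` and `m + 1 = |V|`. So some `y ∈ Y` has degree at
most `t`, which is what the vertex `m` adds to `(a-1)·C(m,2) + t_{s-1}(m)` in the extremal example.
-/

open SimpleGraph

section Weights

variable {n : ℕ}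

lemma card_pairs (X : Finset (Fin n)) : #(pairs n X) = (#X).choose 2 :=
  card_product_filter_lt

lemma mgS_add (v w : Fin n → Fin n → ℕ) (X : Finset (Fin n)) :
    mgS n (fun i j => v i j + w i j) X = mgS n v X + mgS n w X :=
  sum_add_distrib

lemma mgS_const (c : ℕ) (X : Finset (Fin n)) : mgS n (fun _ _ => c) X = c * (#X).choose 2 := by
  rw [mgS, sum_const, card_pairs, smul_eq_mul, mul_comm]

variable {w : Fin n → Fin n → ℕ}

lemma two_mul_mgS_eq_sum_offDiag (hw : ∀ i j, w i j = w j i) (X : Finset (Fin n)) :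
    2 * mgS n w X = ∑ p ∈ X.offDiag, w p.1 p.2 := by
  rw [two_mul, mgS, ← sum_filter_add_sum_filter_not X.offDiag (fun p => p.1 < p.2)]
  congr 1
  · exact sum_congr (by ext; simp [pairs]; grind) fun _ _ => rfl
  · exact sum_equiv (Equiv.prodComm _ _) (by simp [pairs]; grind) fun p _ => hw _ _

lemma two_mul_mgS_eq_sum_sum_erase (hw : ∀ i j, w i j = w j i) (X : Finset (Fin n)) :
    2 * mgS n w X = ∑ v ∈ X, ∑ u ∈ X.erase v, w u v := by
  have hoff : X.offDiag = (X ×ˢ X).filter (fun p => p.1 ≠ p.2) := by ext; simp [and_assoc]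
  rw [two_mul_mgS_eq_sum_offDiag hw, hoff, sum_filter, sum_product, sum_comm]
  refine sum_congr rfl fun v _ => ?_
  rw [← filter_ne' X v, sum_filter]

lemma mgS_insert (hw : ∀ i j, w i j = w j i) {X : Finset (Fin n)} {v : Fin n} (hv : v ∉ X) :
    mgS n w (insert v X) = mgS n w X + ∑ u ∈ X, w u v := by
  have h := two_mul_mgS_eq_sum_offDiag hw (insert v X)
  rw [offDiag_insert hv, sum_union (disjoint_left.2 (by simp; grind)),
    sum_union (disjoint_left.2 (by simp; grind)),
    ← two_mul_mgS_eq_sum_offDiag hw X, sum_product, sum_product] at h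
  simp only [sum_singleton] at h
  rw [sum_congr rfl fun u _ => hw v u] at h
  omega

lemma two_mul_mgS_add_sum_eq_sum_sum_erase (hw : ∀ i j, w i j = w j i) {Y V : Finset (Fin n)}
    (hYV : Y ⊆ V) :
    2 * mgS n w Y + ∑ u ∈ V \ Y, ∑ y ∈ Y, w y u = ∑ y ∈ Y, ∑ u ∈ V.erase y, w u y := by
  have hsplit : ∀ y ∈ Y, ∑ u ∈ V.erase y, w u y
      = ∑ u ∈ Y.erase y, w u y + ∑ u ∈ V \ Y, w y u := fun y hy => by
    rw [show V.erase y = Y.erase y ∪ V \ Y by ext; grind, sum_union (disjoint_left.2 (by grind))]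
    exact congrArg _ (sum_congr rfl fun u _ => hw u y)
  rw [sum_congr rfl hsplit, sum_add_distrib, two_mul_mgS_eq_sum_sum_erase hw, sum_comm]

lemma sub_one_mul_sum_le_two_mul_mgS (hw : ∀ i j, w i j = w j i) {Y : Finset (Fin n)} {u : Fin n}
    (hu : u ∉ Y) (hmax : ∀ y ∈ Y, mgS n w (insert u (Y.erase y)) ≤ mgS n w Y) :
    (#Y - 1) * ∑ y ∈ Y, w y u ≤ 2 * mgS n w Y := by
  have hswap : ∀ y ∈ Y, ∑ z ∈ Y, w z u ≤ w y u + ∑ z ∈ Y.erase y, w z y := fun y hy => by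
    have hu' : u ∉ Y.erase y := fun h => hu (mem_of_mem_erase h)
    have h := hmax y hy
    rw [mgS_insert hw hu', ← insert_erase hy, mgS_insert hw (notMem_erase y Y),
      erase_insert (notMem_erase y Y)] at h
    rw [← add_sum_erase Y (fun z => w z u) hy]
    omega
  have hsum := sum_le_sum hswap
  rw [sum_const, smul_eq_mul, sum_add_distrib, ← two_mul_mgS_eq_sum_sum_erase hw] at hsum
  rw [Nat.sub_one_mul]
  omega

end Weights

section Turan

variable {n : ℕ}

lemma mgS_univ_eq_sum_range (f : ℕ → ℕ → ℕ) :
    mgS n (fun i j => f i j) univ = ∑ j ∈ range n, ∑ i ∈ range j, f i j := by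
  rw [mgS, pairs, sum_filter, sum_product, sum_comm,
    ← Fin.sum_univ_eq_sum_range (fun j => ∑ i ∈ range j, f i j)]
  refine sum_congr rfl fun j _ => ?_
  simp only [Fin.lt_def]
  rw [Fin.sum_univ_eq_sum_range (fun i => if i < (j : ℕ) then f i j else 0), ← sum_filter]
  congr 1
  ext i
  simp only [mem_filter, mem_range]
  omega

lemma card_edgeFinset_eq_mgS (G : SimpleGraph (Fin n)) [DecidableRel G.Adj] :
    #G.edgeFinset = mgS n (fun i j => if G.Adj i j then 1 else 0) univ := by
  have hsymm : ∀ i j, (if G.Adj i j then 1 else 0) = if G.Adj j i then 1 else 0 := by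
    simp [G.adj_comm]
  rw [← Nat.mul_left_cancel_iff two_pos, ← sum_degrees_eq_twice_card_edges,
    two_mul_mgS_eq_sum_sum_erase hsymm]
  refine sum_congr rfl fun v _ => ?_
  rw [sum_erase _ (by simp), ← card_neighborFinset_eq_degree, neighborFinset_eq_filter, card_filter]
  simp [hsymm]

lemma sum_range_ite_mod_ne {r : ℕ} (hr : 0 < r) (j : ℕ) :
    ∑ i ∈ range j, (if i % r ≠ j % r then 1 else 0) = j - j / r := by
  have hcount : #{i ∈ range j | i % r = j % r} = j / r := by
    convert Nat.count_modEq_card (b := j) hr j using 1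
    · rw [Nat.count_eq_card_filter_range]; rfl
    · simp
  have hsplit := card_filter_add_card_filter_not (s := range j) (p := fun i => i % r = j % r)
  rw [card_range] at hsplit
  rw [← card_filter]
  simp only [ne_eq]
  omega

lemma tEdges_eq_mgS (r n : ℕ) :
    tEdges r n = mgS n (fun i j => if (turanGraph n r).Adj i j then 1 else 0) univ := by
  rw [tEdges, Nat.card_eq_fintype_card, ← edgeFinset_card, card_edgeFinset_eq_mgS]

lemma tEdges_eq_sum_range {r : ℕ} (hr : 0 < r) (n : ℕ) :
    tEdges r n = ∑ j ∈ range n, (j - j / r) := by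
  rw [tEdges_eq_mgS, ← sum_congr rfl fun j _ => sum_range_ite_mod_ne hr j]
  exact mgS_univ_eq_sum_range (fun i j => if i % r ≠ j % r then 1 else 0)

lemma tEdges_succ {r : ℕ} (hr : 0 < r) (m : ℕ) : tEdges r (m + 1) = tEdges r m + (m - m / r) := by
  rw [tEdges_eq_sum_range hr, sum_range_succ, ← tEdges_eq_sum_range hr]

lemma tEdges_succ_self {r : ℕ} (hr : 0 < r) : tEdges r (r + 1) = (r + 1).choose 2 - 1 := by
  have hsmall : ∑ j ∈ range r, (j - j / r) = r.choose 2 := by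
    rw [Nat.choose_two_right, ← sum_range_id]
    exact sum_congr rfl fun j hj => by rw [Nat.div_eq_of_lt (mem_range.1 hj), Nat.sub_zero]
  rw [tEdges_eq_sum_range hr, sum_range_succ, hsmall, Nat.div_self hr]
  simp only [Nat.choose_succ_succ', Nat.choose_one_right, Nat.reduceAdd]
  omega

lemma mgS_lt_choose_two_of_not_isClique {G : SimpleGraph (Fin n)} [DecidableRel G.Adj]
    {X : Finset (Fin n)} (hX : ¬ G.IsClique (X : Set (Fin n))) :
    mgS n (fun i j => if G.Adj i j then 1 else 0) X < (#X).choose 2 := by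
  obtain ⟨i, hi, j, hj, hne, hij⟩ : ∃ i ∈ X, ∃ j ∈ X, i < j ∧ ¬ G.Adj i j := by
    simp only [IsClique, Set.Pairwise, not_forall] at hX
    obtain ⟨i, hi, j, hj, hne, hij⟩ := hX
    rcases lt_or_gt_of_ne hne with h | h
    · exact ⟨i, hi, j, hj, h, hij⟩
    · exact ⟨j, hj, i, hi, h, fun h' => hij h'.symm⟩
  rw [← card_pairs, card_eq_sum_ones]
  refine sum_lt_sum (fun p _ => by dsimp only; split_ifs <;> simp) ⟨(i, j), ?_, by simp [hij]⟩
  simp [pairs, hi, hj, hne]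

end Turan

section Extremal

def turanWeight (n r c : ℕ) (i j : Fin n) : ℕ := c + if (turanGraph n r).Adj i j then 1 else 0

variable {n r c : ℕ}

lemma turanWeight_comm (i j : Fin n) : turanWeight n r c i j = turanWeight n r c j i := by
  simp only [turanWeight, (turanGraph n r).adj_comm]

lemma mgS_turanWeight (X : Finset (Fin n)) :
    mgS n (turanWeight n r c) X
      = c * (#X).choose 2 + mgS n (fun i j => if (turanGraph n r).Adj i j then 1 else 0) X := by
  rw [← mgS_const]
  exact mgS_add _ _ X

lemma isNSQ_turanWeight (hr : 0 < r) :
    IsNSQ n (r + 1) ((c + 1) * (r + 1).choose 2 - 1) (turanWeight n r c) := by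
  intro X hX
  have hlt := mgS_lt_choose_two_of_not_isClique fun h => turanGraph_cliqueFree hr X ⟨h, hX⟩
  rw [hX] at hlt
  rw [mgS_turanWeight, hX, add_one_mul]
  omega

lemma mgS_turanWeight_univ : mgS n (turanWeight n r c) univ = c * n.choose 2 + tEdges r n := by
  rw [mgS_turanWeight, card_univ, Fintype.card_fin, tEdges_eq_mgS]

end Extremal

section UpperBound

lemma two_mul_add_sum_le_of_extend_of_exchange {ι : Type*} (U : Finset ι) (D : ι → ℕ)
    {r c I : ℕ} (hU : 2 ≤ #U) (hext : ∀ u ∈ U, I + D u ≤ (c + 1) * (r + 1).choose 2 - 1)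
    (hexch : ∀ u ∈ U, (r - 1) * D u ≤ 2 * I) :
    2 * I + ∑ u ∈ U, D u ≤ (c + 1) * (r * (r - 1)) + #U * ((c + 1) * r - 1) := by
  set q := (c + 1) * (r + 1).choose 2 - 1
  set B := (c + 1) * (r * (r - 1))
  set T := (c + 1) * r - 1
  have hq : 2 * q = B + 2 * T := by
    have h2 := Nat.choose_succ_right_eq (r + 1) 1
    rw [Nat.choose_one_right, Nat.add_sub_cancel] at h2
    rcases Nat.eq_zero_or_pos r with rfl | hr
    · simp [q, B, T]
    have h1 : 1 ≤ (c + 1) * r := Nat.one_le_iff_ne_zero.2 (by positivity)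
    have h3 : 1 ≤ (c + 1) * (r + 1).choose 2 := Nat.mul_pos (by omega) (Nat.choose_pos (by omega))
    simp only [q, B, T]
    zify [h1, h3, hr] at h2 ⊢
    push_cast at h2
    nlinarith
  by_cases hheavy : B ≤ 2 * I
  · have hsum : #U * I + ∑ u ∈ U, D u ≤ #U * q := by
      simpa [sum_add_distrib, mul_comm] using sum_le_sum hext
    obtain ⟨k, hk⟩ : ∃ k, #U = k + 2 := ⟨#U - 2, by omega⟩
    rw [hk] at hsum ⊢
    nlinarith [Nat.mul_le_mul_left k hheavy]
  · have hT : ∀ u ∈ U, D u ≤ T := fun u hu => by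
      have h := (hexch u hu).trans_lt (not_le.1 hheavy)
      rw [show B = (r - 1) * ((c + 1) * r) by ring] at h
      have := Nat.lt_of_mul_lt_mul_left h
      omega
    have := sum_le_sum hT
    rw [sum_const, smul_eq_mul] at this
    omega

variable {n r c : ℕ} {w : Fin n → Fin n → ℕ}

lemma exists_mem_sum_erase_le (hr : 0 < r) (hw : ∀ i j, w i j = w j i)
    (hq : IsNSQ n (r + 1) ((c + 1) * (r + 1).choose 2 - 1) w) {V : Finset (Fin n)} {m : ℕ}
    (hV : #V = m + 1) (hm : r + 1 ≤ m) :
    ∃ y ∈ V, ∑ u ∈ V.erase y, w u y ≤ c * m + (m - m / r) := by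
  obtain ⟨Y, hYmem, hYmax⟩ :=
    exists_max_image (V.powersetCard r) (mgS n w) (powersetCard_nonempty.2 (by omega))
  obtain ⟨hYV, hY⟩ := mem_powersetCard.1 hYmem
  have hext : ∀ u ∈ V \ Y, mgS n w Y + ∑ y ∈ Y, w y u ≤ (c + 1) * (r + 1).choose 2 - 1 :=
    fun u hu => by
      have hu' := (mem_sdiff.1 hu).2
      rw [← mgS_insert hw hu']
      exact hq _ (by rw [card_insert_of_notMem hu', hY])
  have hexch : ∀ u ∈ V \ Y, (r - 1) * ∑ y ∈ Y, w y u ≤ 2 * mgS n w Y := fun u hu => by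
    obtain ⟨huV, hu⟩ := mem_sdiff.1 hu
    rw [← hY]
    refine sub_one_mul_sum_le_two_mul_mgS hw hu fun y hy => hYmax _ (mem_powersetCard.2 ⟨?_, ?_⟩)
    · exact insert_subset huV ((erase_subset y Y).trans hYV)
    · rw [card_insert_of_notMem (fun h => hu (mem_of_mem_erase h)), card_erase_of_mem hy, hY]
      omega
  have hsum := two_mul_add_sum_le_of_extend_of_exchange (V \ Y) _
    (by rw [card_sdiff_of_subset hYV]; omega) hext hexch
  rw [two_mul_mgS_add_sum_eq_sum_sum_erase hw hYV, card_sdiff_of_subset hYV, hV, hY] at hsum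
  have hbound : (c + 1) * (r * (r - 1)) + (m + 1 - r) * ((c + 1) * r - 1)
      < ∑ _y ∈ Y, (c * m + (m - m / r) + 1) := by
    have hd : r * (m / r) ≤ m := Nat.mul_div_le m r
    have hdm : m / r ≤ m := Nat.div_le_self m r
    have h1 : 1 ≤ (c + 1) * r := Nat.one_le_iff_ne_zero.2 (by positivity)
    rw [sum_const, hY, smul_eq_mul]
    zify [hr, h1, hdm, (by omega : r ≤ m + 1)]
    nlinarith
  obtain ⟨y, hy, hlt⟩ := exists_lt_of_sum_lt (hsum.trans_lt hbound)
  exact ⟨y, hYV hy, Nat.lt_succ_iff.1 hlt⟩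

theorem mgS_le_of_isNSQ (hr : 0 < r) (hw : ∀ i j, w i j = w j i)
    (hq : IsNSQ n (r + 1) ((c + 1) * (r + 1).choose 2 - 1) w) {V : Finset (Fin n)}
    (hV : r + 1 ≤ #V) : mgS n w V ≤ c * (#V).choose 2 + tEdges r #V := by
  obtain ⟨m, hm, hVm⟩ : ∃ m, r + 1 ≤ m ∧ #V = m := ⟨_, hV, rfl⟩
  rw [hVm]
  clear hV
  induction m, hm using Nat.le_induction generalizing V with
  | base =>
    have hC : 1 ≤ (r + 1).choose 2 := Nat.choose_pos (by omega)
    have h := hq V hVm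
    rw [add_one_mul] at h
    rw [tEdges_succ_self hr]
    omega
  | succ m hm ih =>
    obtain ⟨y, hy, hdeg⟩ := exists_mem_sum_erase_le hr hw hq hVm hm
    have hrest := ih (V := V.erase y) (by rw [card_erase_of_mem hy, hVm, Nat.add_sub_cancel])
    have hC : (m + 1).choose 2 = m.choose 2 + m := by
      rw [Nat.choose_succ_succ', Nat.choose_one_right, add_comm]
    rw [← insert_erase hy, mgS_insert hw (notMem_erase y V), tEdges_succ hr, hC, mul_add]
    omega

end UpperBound

theorem bondy_tuza_sum (s a n : ℕ) (hs : 2 ≤ s) (ha : 2 ≤ a) (hn : s ≤ n) :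
    (∀ w : Fin n → Fin n → ℕ, (∀ i j, w i j = w j i) →
        IsNSQ n s (a * Nat.choose s 2 - 1) w →
        mgS n w Finset.univ ≤ (a - 1) * Nat.choose n 2 + tEdges (s - 1) n) ∧
    (∃ w : Fin n → Fin n → ℕ, (∀ i j, w i j = w j i) ∧
        IsNSQ n s (a * Nat.choose s 2 - 1) w ∧
        mgS n w Finset.univ = (a - 1) * Nat.choose n 2 + tEdges (s - 1) n) := by
  obtain ⟨r, rfl⟩ : ∃ r, s = r + 1 := ⟨s - 1, by omega⟩
  obtain ⟨c, rfl⟩ : ∃ c, a = c + 1 := ⟨a - 1, by omega⟩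
  simp only [Nat.add_sub_cancel]
  refine ⟨fun w hw hq => ?_, turanWeight n r c, turanWeight_comm, isNSQ_turanWeight (by omega),
    mgS_turanWeight_univ⟩
  simpa using mgS_le_of_isNSQ (by omega) hw hq (V := univ) (by simpa)
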